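/- (Small Speedup Theorem, coverage) Define f-based tour q on [t_i, t_i+1) for even i by: q(t) = f(t_i − 0.5 + 4(t−t_i)) for t_i ≤ t ≤ t_i+0.5; q(t) = f(t_i + 3.5 − 4(t−t_i)) for t_i+0.5 ≤ t ≤ t_i+0.875; q(t) = f(t_i − 3.5 + 4(t−t_i)) for t_i+0.875 ≤ t ≤ t_i+1, where t_i = i/2. Then q is well-defined (the pieces agree at the junction points t_i+0.5 and t_i+0.875 and at t_{i+2}), and for every time t with t_i ≤ t < t_i+0.5, each of the three positions f(t) is attained by q at some time within each of the periods [t_i−0.5,t_i), [t_i,t_i+0.5), and [t_i+0.5,t_i+1) respectively (at the explicit times given in the case analysis). -/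
import Mathlib

/-- The racing tour `q` built from the optimal tour's position function `f`.  On each
block `[n, n+1)` (i.e. `[t_i, t_i + 1)` with `i = 2n` even, `t_i = n`), it races forward
along `f` for one period, backward for `3/4` of a period, and forward for `1/4` of a
period, exactly as in the definition in the paper (with `t_i = ⌊t⌋`):
`q(t) = f(t_i − 1/2 + 4(t−t_i))` for `t_i ≤ t ≤ t_i + 1/2`,
`q(t) = f(t_i + 7/2 − 4(t−t_i))` for `t_i + 1/2 ≤ t ≤ t_i + 7/8`,
`q(t) = f(t_i − 7/2 + 4(t−t_i))` for `t_i + 7/8 ≤ t < t_i + 1`. -/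
noncomputable def racingTour {M : Type*} (f : ℝ → M) (t : ℝ) : M :=
  let n : ℝ := (⌊t⌋ : ℝ)
  let u : ℝ := t - n
  if u ≤ 1 / 2 then f (n - 1 / 2 + 4 * u)
  else if u ≤ 7 / 8 then f (n + 7 / 2 - 4 * u)
  else f (n - 7 / 2 + 4 * u)

lemma rt_eval {M : Type*} (f : ℝ → M) (n : ℤ) (s : ℝ) (h1 : (n : ℝ) ≤ s)
    (h2 : s < (n : ℝ) + 1) :
    racingTour f s =
      if s - n ≤ 1 / 2 then f ((n : ℝ) - 1 / 2 + 4 * (s - n))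
      else if s - n ≤ 7 / 8 then f ((n : ℝ) + 7 / 2 - 4 * (s - n))
      else f ((n : ℝ) - 7 / 2 + 4 * (s - n)) := by
  have hfl : ⌊s⌋ = n := Int.floor_eq_iff.mpr ⟨h1, h2⟩
  simp only [racingTour, hfl]

/-- On the closed block `[n, n+1]` the racing tour agrees with an explicitly
piecewise-defined continuous function. -/
lemma rt_continuousOn {M : Type*} [MetricSpace M] (f : ℝ → M) (hf : Continuous f) (n : ℤ) :
    ContinuousOn (racingTour f) (Set.Icc (n : ℝ) ((n : ℝ) + 1)) := by
  set g : ℝ → M := fun t =>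
    if t - (n : ℝ) ≤ 1 / 2 then f ((n : ℝ) - 1 / 2 + 4 * (t - n))
    else if t - (n : ℝ) ≤ 7 / 8 then f ((n : ℝ) + 7 / 2 - 4 * (t - n))
    else f ((n : ℝ) - 7 / 2 + 4 * (t - n)) with hg
  have hgc : Continuous g := by
    rw [hg]
    apply Continuous.if_le
    · exact hf.comp (by continuity)
    · apply Continuous.if_le
      · exact hf.comp (by continuity)
      · exact hf.comp (by continuity)
      · continuity
      · continuity
      · intro x hx
        have : x = (n : ℝ) + 7 / 8 := by linarith
        subst this; norm_num
    · continuity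
    · continuity
    · intro x hx
      have hx' : x = (n : ℝ) + 1 / 2 := by linarith
      subst hx'
      rw [if_pos (by norm_num)]
      norm_num; congr 1; ring
  apply hgc.continuousOn.congr
  intro t ht
  rcases lt_or_eq_of_le ht.2 with h | h
  · rw [rt_eval f n t ht.1 h, hg]
  · subst h
    have h1 : ((n : ℝ) + 1) = ((n + 1 : ℤ) : ℝ) := by push_cast; ring
    rw [h1, rt_eval f (n + 1) _ (le_refl _) (by push_cast; linarith)]
    simp only [hg]
    rw [if_pos (by push_cast; norm_num), if_neg (by push_cast; norm_num),
      if_neg (by push_cast; norm_num)]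
    congr 1
    push_cast; ring

lemma rt_continuous {M : Type*} [MetricSpace M] (f : ℝ → M) (hf : Continuous f) :
    Continuous (racingTour f) := by
  rw [continuous_iff_continuousAt]
  intro x
  set n : ℤ := ⌊x⌋ with hn
  have h1 : ((n : ℝ) - 1) = ((n - 1 : ℤ) : ℝ) := by push_cast; ring
  have hu : Set.Icc ((n : ℝ) - 1) (n : ℝ) ∪ Set.Icc (n : ℝ) ((n : ℝ) + 1)
      = Set.Icc ((n : ℝ) - 1) ((n : ℝ) + 1) :=
    Set.Icc_union_Icc_eq_Icc (by linarith) (by linarith)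
  have hc1 : ContinuousOn (racingTour f) (Set.Icc ((n : ℝ) - 1) (n : ℝ)) := by
    rw [h1]
    have := rt_continuousOn f hf (n - 1)
    convert this using 2
    push_cast; ring
  have hc2 := rt_continuousOn f hf n
  have hc : ContinuousOn (racingTour f) (Set.Icc ((n : ℝ) - 1) ((n : ℝ) + 1)) := by
    rw [← hu]
    intro y hy
    have hA : ContinuousWithinAt (racingTour f) (Set.Icc ((n : ℝ) - 1) (n : ℝ)) y := by
      by_cases h : y ∈ Set.Icc ((n : ℝ) - 1) (n : ℝ)
      · exact hc1 y h
      · exact continuousWithinAt_of_notMem_closure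
          (by rwa [IsClosed.closure_eq isClosed_Icc])
    have hB : ContinuousWithinAt (racingTour f) (Set.Icc (n : ℝ) ((n : ℝ) + 1)) y := by
      by_cases h : y ∈ Set.Icc (n : ℝ) ((n : ℝ) + 1)
      · exact hc2 y h
      · exact continuousWithinAt_of_notMem_closure
          (by rwa [IsClosed.closure_eq isClosed_Icc])
    exact hA.union hB
  have hmem : Set.Icc ((n : ℝ) - 1) ((n : ℝ) + 1) ∈ nhds x := by
    apply Filter.mem_of_superset (Ioo_mem_nhds ?_ ?_) Set.Ioo_subset_Icc_self
    · have := Int.floor_le x; rw [← hn] at this; linarith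
    · have := Int.lt_floor_add_one x; rw [← hn] at this; linarith
  exact (hc x (mem_of_mem_nhds hmem)).continuousAt hmem

/-- Small Speedup Theorem, coverage. -/
theorem stmt4 {M : Type*} [MetricSpace M] (f : ℝ → M) (hf : Continuous f) :
    Continuous (racingTour f) ∧
    (∀ n : ℤ, ∀ t : ℝ, t ∈ Set.Ico (n : ℝ) ((n : ℝ) + 1 / 2) →
      ((n : ℝ) + (1 / 4) * (((n : ℝ) - t) - 3 / 2) ∈ Set.Ico ((n : ℝ) - 1 / 2) (n : ℝ) ∧
        racingTour f ((n : ℝ) + (1 / 4) * (((n : ℝ) - t) - 3 / 2)) = f t) ∧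
      ((n : ℝ) + (1 / 4) * ((t - (n : ℝ)) + 1 / 2) ∈ Set.Ico (n : ℝ) ((n : ℝ) + 1 / 2) ∧
        racingTour f ((n : ℝ) + (1 / 4) * ((t - (n : ℝ)) + 1 / 2)) = f t) ∧
      ((n : ℝ) + (1 / 4) * (((n : ℝ) - t) + 7 / 2) ∈ Set.Ico ((n : ℝ) + 1 / 2) ((n : ℝ) + 1) ∧
        racingTour f ((n : ℝ) + (1 / 4) * (((n : ℝ) - t) + 7 / 2)) = f t)) ∧
    (∀ n : ℤ, ∀ t : ℝ, t ∈ Set.Ico ((n : ℝ) + 1 / 2) ((n : ℝ) + 1) →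
      (((n : ℝ) + 1 / 2) + (1 / 4) * ((t - ((n : ℝ) + 1 / 2)) - 1)
          ∈ Set.Ico (n : ℝ) ((n : ℝ) + 1 / 2) ∧
        racingTour f (((n : ℝ) + 1 / 2) + (1 / 4) * ((t - ((n : ℝ) + 1 / 2)) - 1)) = f t) ∧
      (((n : ℝ) + 1 / 2) + (1 / 4) * ((((n : ℝ) + 1 / 2) - t) + 1)
          ∈ Set.Ico ((n : ℝ) + 1 / 2) ((n : ℝ) + 1) ∧
        racingTour f (((n : ℝ) + 1 / 2) + (1 / 4) * ((((n : ℝ) + 1 / 2) - t) + 1)) = f t) ∧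
      (((n : ℝ) + 1 / 2) + (1 / 4) * ((t - ((n : ℝ) + 1 / 2)) + 2)
          ∈ Set.Ico ((n : ℝ) + 1) ((n : ℝ) + 3 / 2) ∧
        racingTour f (((n : ℝ) + 1 / 2) + (1 / 4) * ((t - ((n : ℝ) + 1 / 2)) + 2)) = f t)) := by
  refine ⟨rt_continuous f hf, ?_, ?_⟩
  · intro n t ht
    obtain ⟨ht1, ht2⟩ := ht
    refine ⟨⟨⟨by linarith, by linarith⟩, ?_⟩, ⟨⟨by linarith, by linarith⟩, ?_⟩,
      ⟨⟨by linarith, by linarith⟩, ?_⟩⟩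
    · rw [rt_eval f (n - 1) _ (by push_cast; linarith) (by push_cast; linarith)]
      rw [if_neg (by push_cast; linarith), if_pos (by push_cast; linarith)]
      congr 1; push_cast; ring
    · rw [rt_eval f n _ (by linarith) (by linarith)]
      rw [if_pos (by linarith)]
      congr 1; ring
    · rw [rt_eval f n _ (by linarith) (by linarith)]
      rw [if_neg (by linarith), if_pos (by linarith)]
      congr 1; ring
  · intro n t ht
    obtain ⟨ht1, ht2⟩ := ht
    refine ⟨⟨⟨by linarith, by linarith⟩, ?_⟩, ⟨⟨by linarith, by linarith⟩, ?_⟩,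
      ⟨⟨by linarith, by linarith⟩, ?_⟩⟩
    · rw [rt_eval f n _ (by linarith) (by linarith)]
      rw [if_pos (by linarith)]
      congr 1; ring
    · rw [rt_eval f n _ (by linarith) (by linarith)]
      rw [if_neg (by linarith), if_pos (by linarith)]
      congr 1; ring
    · rw [rt_eval f (n + 1) _ (by push_cast; linarith) (by push_cast; linarith)]
      rw [if_pos (by push_cast; linarith)]
      congr 1; push_cast; ring
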